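/- Let G = Q₈ ⋊ ℤ₃ where the generator σ of ℤ₃ acts on the quaternion group Q₈ by cyclically permuting i, j, k. The Cayley graph of G with connection set {i, -i, σ, σ⁻¹} has (1 + √17)/2 as an eigenvalue; in particular, it is not integral. -/

import Mathlib

/-!
Let `H = ⟨σ * i ^ 2⟩`, the cyclic subgroup of order 6 generated by `σ` and the central
involution `i ^ 2 = -1`. Left multiplication permutes the cosets `H, iH, jH, kH` the way `A₄`
permutes four points: `i` swaps `H ↔ iH` and `jH ↔ kH`, while `σ` fixes `H` and cycles
`iH → kH → jH → iH`. These cosets are distinct because `i, j, k` have order 4 while `H` has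
exponent 6. Hence for `μ ^ 2 = μ + 4` the function with values `2μ + 2, 2, -μ - 2, -μ - 2` on
them and `0` on all other cosets is an eigenfunction of the Schreier graph on `G ⧸ H`, and its
pullback to `G` is a `μ`-eigenvector of the Cayley graph. The root `(1 + √17) / 2` is irrational.
-/

/-- The Cayley graph of a group `G` with connection set `S`. For a symmetric set `S`
with `1 ∉ S`, `g` and `h` are adjacent iff `h * g⁻¹ ∈ S`. -/
def cayley {G : Type*} [Group G] (S : Set G) : SimpleGraph G :=
  SimpleGraph.fromRel (fun g h => h * g⁻¹ ∈ S)

/-- A finite graph is integral if all eigenvalues of its adjacency matrix are integers. -/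
def IsIntegralGraph {V : Type*} [Finite V] (Γ : SimpleGraph V) : Prop :=
  letI := Fintype.ofFinite V
  letI := Classical.decEq V
  letI : DecidableRel Γ.Adj := Classical.decRel _
  ∀ μ ∈ spectrum ℝ (Γ.adjMatrix ℝ), ∃ z : ℤ, (z : ℝ) = μ

/-- `μ` is an eigenvalue of the adjacency matrix of the finite graph `Γ`. -/
def IsAdjEigenvalue {V : Type*} [Finite V] (Γ : SimpleGraph V) (μ : ℝ) : Prop :=
  letI := Fintype.ofFinite V
  letI := Classical.decEq V
  letI : DecidableRel Γ.Adj := Classical.decRel _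
  μ ∈ spectrum ℝ (Γ.adjMatrix ℝ)

section Cayley

open Matrix

variable {G : Type*} [Group G]

theorem cayley_adj_iff {S : Set G} (hS : ∀ s ∈ S, s⁻¹ ∈ S) (h1 : (1 : G) ∉ S) {g h : G} :
    (cayley S).Adj g h ↔ h * g⁻¹ ∈ S := by
  refine ⟨fun ⟨_, hgh⟩ => hgh.elim id fun hhg => by simpa using hS _ hhg,
    fun hgh => ⟨?_, Or.inl hgh⟩⟩
  rintro rfl
  exact h1 (by simpa using hgh)

theorem cayley_adjMatrix_mulVec_apply [Fintype G] {R : Type*}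
    [NonAssocSemiring R] {S : Finset G} (hS : ∀ s ∈ S, s⁻¹ ∈ S) (h1 : (1 : G) ∉ S)
    [DecidableRel (cayley (S : Set G)).Adj] (f : G → R) (g : G) :
    ((cayley (S : Set G)).adjMatrix R *ᵥ f) g = ∑ s ∈ S, f (s * g) := by
  rw [SimpleGraph.adjMatrix_mulVec_apply]
  refine Finset.sum_nbij' (· * g⁻¹) (· * g) ?_ ?_ ?_ ?_ ?_ <;>
    simp [cayley_adj_iff (S := (S : Set G)) hS h1]

theorem isAdjEigenvalue_cayley_of_eigenfunction [Finite G] {S : Finset G}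
    (hS : ∀ s ∈ S, s⁻¹ ∈ S) (h1 : (1 : G) ∉ S) {μ : ℝ} (f : G → ℝ) (hf : f ≠ 0)
    (hfμ : ∀ g, ∑ s ∈ S, f (s * g) = μ * f g) :
    IsAdjEigenvalue (cayley (S : Set G)) μ := by
  let := Fintype.ofFinite G
  let := Classical.decEq G
  let : DecidableRel (cayley (S : Set G)).Adj := Classical.decRel _
  show μ ∈ spectrum ℝ ((cayley (S : Set G)).adjMatrix ℝ)
  rw [← Matrix.spectrum_toLin']
  refine Module.End.HasEigenvalue.mem_spectrum
    (Module.End.hasEigenvalue_of_hasEigenvector ⟨?_, hf⟩)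
  rw [Module.End.mem_eigenspace_iff, Matrix.toLin'_apply]
  ext g
  rw [cayley_adjMatrix_mulVec_apply hS h1, hfμ, Pi.smul_apply, smul_eq_mul]

theorem isAdjEigenvalue_cayley_of_quotient [Finite G] {S : Finset G}
    (hS : ∀ s ∈ S, s⁻¹ ∈ S) (h1 : (1 : G) ∉ S) {H : Subgroup G} {μ : ℝ} (F : G ⧸ H → ℝ)
    (hF : F ≠ 0) (hFμ : ∀ q : G ⧸ H, ∑ s ∈ S, F (s • q) = μ * F q) :
    IsAdjEigenvalue (cayley (S : Set G)) μ :=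
  isAdjEigenvalue_cayley_of_eigenfunction hS h1 (F ∘ (↑))
    (fun h => hF (QuotientGroup.mk_surjective.injective_comp_right h)) fun g => hFμ g

theorem Finset.sum_pair_inv_pair [DecidableEq G] {M : Type*} [AddCommMonoid M] {x y : G}
    (hx : 2 < orderOf x) (hy : 2 < orderOf y) (hxy : orderOf x ≠ orderOf y) (f : G → M) :
    ∑ s ∈ ({x, x⁻¹, y, y⁻¹} : Finset G), f s = f x + f x⁻¹ + (f y + f y⁻¹) := by
  have ne_inv {z : G} (hz : 2 < orderOf z) : z ≠ z⁻¹ := fun h =>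
    (orderOf_le_of_pow_eq_one two_pos (by rw [sq, ← eq_inv_iff_mul_eq_one.1 h])).not_gt hz
  have ne_of_orderOf_ne {a b : G} (hab : orderOf a ≠ orderOf b) : a ≠ b :=
    mt (congrArg orderOf) hab
  rw [Finset.sum_insert (by simp [ne_inv hx, ne_of_orderOf_ne, hxy]),
    Finset.sum_insert (by simp [ne_of_orderOf_ne, hxy]), Finset.sum_pair (ne_inv hy), add_assoc]

theorem not_isIntegralGraph_of_isAdjEigenvalue {V : Type*} [Finite V] {Γ : SimpleGraph V}
    {μ : ℝ} (hμ : IsAdjEigenvalue Γ μ) (hirr : Irrational μ) : ¬ IsIntegralGraph Γ :=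
  fun hΓ => let ⟨z, hz⟩ := hΓ μ hμ; hirr.ne_int z hz.symm

end Cayley

structure IsQ8Z3Gens {G : Type*} [Group G] (i j k σ : G) : Prop where
  orderOf_i : orderOf i = 4
  orderOf_σ : orderOf σ = 3
  conj_i : σ⁻¹ * i * σ = j
  conj_j : σ⁻¹ * j * σ = k
  conj_k : σ⁻¹ * k * σ = i
  j_sq : j ^ 2 = i ^ 2
  i_mul_j : i * j = k

theorem QuotientGroup.smul_coe_one {G : Type*} [Group G] {H : Subgroup G} (g : G) :
    g • ((1 : G) : G ⧸ H) = g := by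
  rw [MulAction.Quotient.smul_coe, smul_eq_mul, mul_one]

theorem QuotientGroup.inv_smul_coe_self {G : Type*} [Group G] {H : Subgroup G} (g : G) :
    g⁻¹ • (g : G ⧸ H) = (1 : G) :=
  inv_smul_eq_iff.2 (smul_coe_one g).symm

theorem QuotientGroup.smul_coe_eq_of_mul_eq {G : Type*} [Group G] {H : Subgroup G}
    {s x y h : G} (hh : h ∈ H) (e : s * x = y * h) : s • (x : G ⧸ H) = y := by
  rw [MulAction.Quotient.smul_coe, smul_eq_mul, e, QuotientGroup.mk_mul_of_mem y hh]

namespace IsQ8Z3Gens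

open Subgroup

variable {G : Type*} [Group G] {i j k σ : G}

theorem pow_four_i (h : IsQ8Z3Gens i j k σ) : i ^ 4 = 1 :=
  h.orderOf_i ▸ pow_orderOf_eq_one i

theorem pow_three_σ (h : IsQ8Z3Gens i j k σ) : σ ^ 3 = 1 :=
  h.orderOf_σ ▸ pow_orderOf_eq_one σ

theorem σ_mul_i (h : IsQ8Z3Gens i j k σ) : σ * i = k * σ := by
  rw [← h.conj_k]; group

theorem σ_mul_j (h : IsQ8Z3Gens i j k σ) : σ * j = i * σ := by
  rw [← h.conj_i]; group

theorem σ_mul_k (h : IsQ8Z3Gens i j k σ) : σ * k = j * σ := by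
  rw [← h.conj_j]; group

theorem i_mul_k (h : IsQ8Z3Gens i j k σ) : i * k = j * i ^ 2 :=
  calc i * k = i ^ 2 * j := by rw [← h.i_mul_j, sq, mul_assoc]
    _ = j * i ^ 2 := by rw [← h.j_sq]; group

theorem commute_σ_i_sq (h : IsQ8Z3Gens i j k σ) : Commute σ (i ^ 2) := by
  have : σ⁻¹ * i ^ 2 * σ = i ^ 2 :=
    calc σ⁻¹ * i ^ 2 * σ = j ^ 2 := by rw [← h.conj_i, sq, sq]; group
      _ = i ^ 2 := h.j_sq
  calc σ * i ^ 2 = σ * (σ⁻¹ * i ^ 2 * σ) := by rw [this]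
    _ = i ^ 2 * σ := by group

theorem orderOf_j (h : IsQ8Z3Gens i j k σ) : orderOf j = 4 :=
  (SemiconjBy.orderOf_eq σ h.σ_mul_j).trans h.orderOf_i

theorem orderOf_k (h : IsQ8Z3Gens i j k σ) : orderOf k = 4 :=
  (SemiconjBy.orderOf_eq σ h.σ_mul_k).trans h.orderOf_j

theorem σ_mem (h : IsQ8Z3Gens i j k σ) : σ ∈ zpowers (σ * i ^ 2) := by
  have : (σ * i ^ 2) ^ 4 = σ := by
    rw [h.commute_σ_i_sq.mul_pow, ← pow_mul, pow_succ' σ 3, h.pow_three_σ,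
      show 2 * 4 = 4 * 2 by rfl, pow_mul, h.pow_four_i]
    group
  have hw := npow_mem_zpowers (σ * i ^ 2) 4
  rwa [this] at hw

theorem i_sq_mem (h : IsQ8Z3Gens i j k σ) : i ^ 2 ∈ zpowers (σ * i ^ 2) := by
  have : (σ * i ^ 2) ^ 3 = i ^ 2 := by
    rw [h.commute_σ_i_sq.mul_pow, h.pow_three_σ, ← pow_mul, show 2 * 3 = 4 + 2 by rfl, pow_add,
      h.pow_four_i]
    group
  have hw := npow_mem_zpowers (σ * i ^ 2) 3
  rwa [this] at hw

theorem pow_six_eq_one_of_mem (h : IsQ8Z3Gens i j k σ) {x : G} (hx : x ∈ zpowers (σ * i ^ 2)) :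
    x ^ 6 = 1 := by
  obtain ⟨n, rfl⟩ := mem_zpowers_iff.1 hx
  have : (σ * i ^ 2) ^ 6 = 1 := by
    rw [h.commute_σ_i_sq.mul_pow, ← pow_mul, (pow_mul σ 3 2 : σ ^ 6 = _),
      (pow_mul i 4 3 : i ^ (2 * 6) = _), h.pow_three_σ, h.pow_four_i]
    group
  rw [← zpow_natCast, ← zpow_mul, mul_comm, zpow_mul, zpow_natCast, this, one_zpow]

theorem notMem_of_orderOf_eq_four (h : IsQ8Z3Gens i j k σ) {x : G} (hx : orderOf x = 4) :
    x ∉ zpowers (σ * i ^ 2) := fun hmem => by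
  have := orderOf_dvd_of_pow_eq_one (h.pow_six_eq_one_of_mem hmem)
  rw [hx] at this
  norm_num at this

end IsQ8Z3Gens

section Cosets

open Subgroup QuotientGroup

variable {G : Type*} [Group G] {i j k σ : G}

local notation "𝒬" => G ⧸ zpowers (σ * i ^ 2)

def q8Cosets (i j k σ : G) : Set (G ⧸ zpowers (σ * i ^ 2)) := {↑(1 : G), ↑i, ↑j, ↑k}

open Classical in
noncomputable def q8CosetEigenfunction (i j k σ : G) (μ : ℝ) (q : G ⧸ zpowers (σ * i ^ 2)) :
    ℝ :=
  if q = ↑(1 : G) then 2 * μ + 2 else if q = i then 2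
  else if q ∈ q8Cosets i j k σ then -μ - 2 else 0

theorem q8CosetEigenfunction_one (μ : ℝ) : q8CosetEigenfunction i j k σ μ (1 : G) = 2 * μ + 2 :=
  if_pos rfl

theorem q8CosetEigenfunction_of_notMem {μ : ℝ} {q : 𝒬} (hq : q ∉ q8Cosets i j k σ) :
    q8CosetEigenfunction i j k σ μ q = 0 := by
  simp_all [q8CosetEigenfunction, q8Cosets]

namespace IsQ8Z3Gens

theorem i_smul_i (h : IsQ8Z3Gens i j k σ) : i • (i : 𝒬) = (1 : G) :=
  smul_coe_eq_of_mul_eq h.i_sq_mem (by rw [one_mul, sq])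

theorem i_smul_j (h : IsQ8Z3Gens i j k σ) : i • (j : 𝒬) = k :=
  smul_coe_eq_of_mul_eq (one_mem _) (by rw [h.i_mul_j, mul_one])

theorem i_smul_k (h : IsQ8Z3Gens i j k σ) : i • (k : 𝒬) = j :=
  smul_coe_eq_of_mul_eq h.i_sq_mem h.i_mul_k

theorem σ_smul_one (h : IsQ8Z3Gens i j k σ) : σ • ((1 : G) : 𝒬) = (1 : G) :=
  smul_coe_eq_of_mul_eq h.σ_mem (by group)

theorem σ_smul_i (h : IsQ8Z3Gens i j k σ) : σ • (i : 𝒬) = k :=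
  smul_coe_eq_of_mul_eq h.σ_mem h.σ_mul_i

theorem σ_smul_j (h : IsQ8Z3Gens i j k σ) : σ • (j : 𝒬) = i :=
  smul_coe_eq_of_mul_eq h.σ_mem h.σ_mul_j

theorem σ_smul_k (h : IsQ8Z3Gens i j k σ) : σ • (k : 𝒬) = j :=
  smul_coe_eq_of_mul_eq h.σ_mem h.σ_mul_k

theorem i_inv_smul_one (h : IsQ8Z3Gens i j k σ) : i⁻¹ • ((1 : G) : 𝒬) = i :=
  inv_smul_eq_iff.2 h.i_smul_i.symm

theorem i_inv_smul_j (h : IsQ8Z3Gens i j k σ) : i⁻¹ • (j : 𝒬) = k :=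
  inv_smul_eq_iff.2 h.i_smul_k.symm

theorem i_inv_smul_k (h : IsQ8Z3Gens i j k σ) : i⁻¹ • (k : 𝒬) = j :=
  inv_smul_eq_iff.2 h.i_smul_j.symm

theorem σ_inv_smul_one (h : IsQ8Z3Gens i j k σ) : σ⁻¹ • ((1 : G) : 𝒬) = (1 : G) :=
  inv_smul_eq_iff.2 h.σ_smul_one.symm

theorem σ_inv_smul_i (h : IsQ8Z3Gens i j k σ) : σ⁻¹ • (i : 𝒬) = j :=
  inv_smul_eq_iff.2 h.σ_smul_j.symm

theorem σ_inv_smul_j (h : IsQ8Z3Gens i j k σ) : σ⁻¹ • (j : 𝒬) = k :=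
  inv_smul_eq_iff.2 h.σ_smul_k.symm

theorem σ_inv_smul_k (h : IsQ8Z3Gens i j k σ) : σ⁻¹ • (k : 𝒬) = i :=
  inv_smul_eq_iff.2 h.σ_smul_i.symm

theorem coe_ne_one_of_orderOf_eq_four (h : IsQ8Z3Gens i j k σ) {x : G} (hx : orderOf x = 4) :
    (x : 𝒬) ≠ (1 : G) := fun hx1 =>
  h.notMem_of_orderOf_eq_four (orderOf_inv x ▸ hx) (by simpa using QuotientGroup.eq.1 hx1)

theorem coe_j_ne_i (h : IsQ8Z3Gens i j k σ) : (j : 𝒬) ≠ i := fun hji =>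
  h.coe_ne_one_of_orderOf_eq_four h.orderOf_k (by rw [← h.i_smul_j, hji, h.i_smul_i])

theorem coe_k_ne_i (h : IsQ8Z3Gens i j k σ) : (k : 𝒬) ≠ i := fun hki =>
  h.coe_ne_one_of_orderOf_eq_four h.orderOf_j (by rw [← h.i_smul_k, hki, h.i_smul_i])

theorem mem_q8Cosets_of_smul_mem (h : IsQ8Z3Gens i j k σ) {s : G}
    (hs : s ∈ ({i, i⁻¹, σ, σ⁻¹} : Set G)) {q : 𝒬} (hq : s • q ∈ q8Cosets i j k σ) :
    q ∈ q8Cosets i j k σ := by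
  rw [← inv_smul_smul s q]
  rcases hq with hq | hq | hq | hq <;> rw [hq] <;> rcases hs with rfl | rfl | rfl | rfl <;>
    simp [q8Cosets, h.i_smul_i, h.i_smul_j, h.i_smul_k, h.σ_smul_one, h.σ_smul_i,
      h.σ_smul_j, h.σ_smul_k, h.i_inv_smul_one, h.i_inv_smul_j, h.i_inv_smul_k,
      h.σ_inv_smul_one, h.σ_inv_smul_i, h.σ_inv_smul_j, h.σ_inv_smul_k]

theorem q8CosetEigenfunction_i (h : IsQ8Z3Gens i j k σ) (μ : ℝ) :
    q8CosetEigenfunction i j k σ μ i = 2 := by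
  simp [q8CosetEigenfunction, h.coe_ne_one_of_orderOf_eq_four h.orderOf_i]

theorem q8CosetEigenfunction_j (h : IsQ8Z3Gens i j k σ) (μ : ℝ) :
    q8CosetEigenfunction i j k σ μ j = -μ - 2 := by
  simp [q8CosetEigenfunction, q8Cosets, h.coe_ne_one_of_orderOf_eq_four h.orderOf_j, h.coe_j_ne_i]

theorem q8CosetEigenfunction_k (h : IsQ8Z3Gens i j k σ) (μ : ℝ) :
    q8CosetEigenfunction i j k σ μ k = -μ - 2 := by
  simp [q8CosetEigenfunction, q8Cosets, h.coe_ne_one_of_orderOf_eq_four h.orderOf_k, h.coe_k_ne_i]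

theorem q8CosetEigenfunction_eigen_eq (h : IsQ8Z3Gens i j k σ) {μ : ℝ} (hμ : μ ^ 2 = μ + 4)
    (q : 𝒬) :
    let F := q8CosetEigenfunction i j k σ μ
    F (i • q) + F (i⁻¹ • q) + (F (σ • q) + F (σ⁻¹ • q)) = μ * F q := by
  intro F
  by_cases hq : q ∈ q8Cosets i j k σ
  · rcases hq with rfl | rfl | rfl | rfl
    · simp only [F, smul_coe_one, h.i_inv_smul_one, h.σ_smul_one, h.σ_inv_smul_one,
        q8CosetEigenfunction_one, h.q8CosetEigenfunction_i]
      linear_combination (-2) * hμ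
    · simp only [F, h.i_smul_i, inv_smul_coe_self, h.σ_smul_i, h.σ_inv_smul_i,
        q8CosetEigenfunction_one, h.q8CosetEigenfunction_i, h.q8CosetEigenfunction_k,
        h.q8CosetEigenfunction_j]
      ring
    · simp only [F, h.i_smul_j, h.i_inv_smul_j, h.σ_smul_j, h.σ_inv_smul_j,
        h.q8CosetEigenfunction_i, h.q8CosetEigenfunction_j, h.q8CosetEigenfunction_k]
      linear_combination hμ
    · simp only [F, h.i_smul_k, h.i_inv_smul_k, h.σ_smul_k, h.σ_inv_smul_k,
        h.q8CosetEigenfunction_i, h.q8CosetEigenfunction_j, h.q8CosetEigenfunction_k]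
      linear_combination hμ
  · have hsq {s : G} (hs : s ∈ ({i, i⁻¹, σ, σ⁻¹} : Set G)) : F (s • q) = 0 :=
      q8CosetEigenfunction_of_notMem fun hsq => hq (h.mem_q8Cosets_of_smul_mem hs hsq)
    rw [hsq (by simp), hsq (by simp), hsq (by simp), hsq (by simp),
      show F q = 0 from q8CosetEigenfunction_of_notMem hq]
    ring

theorem isAdjEigenvalue_cayley [Finite G] (h : IsQ8Z3Gens i j k σ) {μ : ℝ}
    (hμ : μ ^ 2 = μ + 4) : IsAdjEigenvalue (cayley ({i, i⁻¹, σ, σ⁻¹} : Set G)) μ := by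
  classical
  have hi : 2 < orderOf i := by rw [h.orderOf_i]; norm_num
  have hσ : 2 < orderOf σ := by rw [h.orderOf_σ]; norm_num
  have hiσ : orderOf i ≠ orderOf σ := by rw [h.orderOf_i, h.orderOf_σ]; norm_num
  rw [show ({i, i⁻¹, σ, σ⁻¹} : Set G) = ↑({i, i⁻¹, σ, σ⁻¹} : Finset G) by simp]
  refine isAdjEigenvalue_cayley_of_quotient ?_ ?_ (q8CosetEigenfunction i j k σ μ)
    (fun h0 => two_ne_zero ((h.q8CosetEigenfunction_i μ).symm.trans (congrFun h0 _))) fun q => ?_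
  · simp
  · have ne_one {x : G} (hx : 2 < orderOf x) : x ≠ 1 := by rintro rfl; simp at hx
    simp [eq_comm (a := (1 : G)), ne_one hi, ne_one hσ]
  · rw [Finset.sum_pair_inv_pair hi hσ hiσ]
    exact h.q8CosetEigenfunction_eigen_eq hμ q

end IsQ8Z3Gens

end Cosets

theorem Q8_rtimes_Z3_cayley_not_integral_general (G : Type*) [Group G] [Finite G]
    (i σ : G) (hi : orderOf i = 4) (hσ : orderOf σ = 3)
    -- with j := i^σ and k := j^σ, the quaternion relations hold and k^σ = i
    (hsq : i ^ 2 = (σ⁻¹ * i * σ) ^ 2)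
    (hmul : i * (σ⁻¹ * i * σ) = σ⁻¹ * (σ⁻¹ * i * σ) * σ)
    (hki : σ⁻¹ * (σ⁻¹ * (σ⁻¹ * i * σ) * σ) * σ = i) :
    IsAdjEigenvalue (cayley ({i, i⁻¹, σ, σ⁻¹} : Set G)) ((1 + Real.sqrt 17) / 2) ∧
      ¬ IsIntegralGraph (cayley ({i, i⁻¹, σ, σ⁻¹} : Set G)) := by
  have hgens : IsQ8Z3Gens i (σ⁻¹ * i * σ) (σ⁻¹ * (σ⁻¹ * i * σ) * σ) σ :=
    ⟨hi, hσ, rfl, rfl, hki, hsq.symm, hmul⟩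
  have hroot : ((1 + Real.sqrt 17) / 2) ^ 2 = (1 + Real.sqrt 17) / 2 + 4 := by
    linear_combination Real.sq_sqrt (show (0 : ℝ) ≤ 17 by norm_num) / 4
  have hirr : Irrational ((1 + Real.sqrt 17) / 2) := by
    have h17 : Irrational (Real.sqrt 17) := by
      simpa using (by norm_num : Nat.Prime 17).irrational_sqrt
    simpa using (h17.natCast_add 1).div_natCast two_ne_zero
  have hμ := hgens.isAdjEigenvalue_cayley hroot
  exact ⟨hμ, not_isIntegralGraph_of_isAdjEigenvalue hμ hirr⟩

theorem Q8_rtimes_Z3_cayley_not_integral (G : Type*) [Group G] [Finite G]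
    (hcard : Nat.card G = 24)
    (i σ : G) (hi : orderOf i = 4) (hσ : orderOf σ = 3)
    -- with j := i^σ and k := j^σ, the quaternion relations hold and k^σ = i
    (hsq : i ^ 2 = (σ⁻¹ * i * σ) ^ 2)
    (hmul : i * (σ⁻¹ * i * σ) = σ⁻¹ * (σ⁻¹ * i * σ) * σ)
    (hki : σ⁻¹ * (σ⁻¹ * (σ⁻¹ * i * σ) * σ) * σ = i)
    (hgen : Subgroup.closure {i, σ} = ⊤) :
    IsAdjEigenvalue (cayley ({i, i⁻¹, σ, σ⁻¹} : Set G)) ((1 + Real.sqrt 17) / 2) ∧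
      ¬ IsIntegralGraph (cayley ({i, i⁻¹, σ, σ⁻¹} : Set G)) :=
  Q8_rtimes_Z3_cayley_not_integral_general G i σ hi hσ hsq hmul hki
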